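/- arXiv:1706.03866 — 3 statements merged into one kernel-verified Lean document; each statement's English description precedes it below -/
import Mathlib

section
/- Let X, K, Z be finite sets, P_{XZ} a probability distribution on X × Z, and Q_Z a fully supported probability distribution on Z. Let G be a random function from X to K (a random variable taking values in the set of functions X → K) satisfying the universal₂ collision bound P[G(x₁) = G(x₂)] ≤ 1/|K| for all x₁ ≠ x₂ in X. Then for every γ > 0, E_G[ S(G(X)|Z) ] ≤ E_γ(P_{XZ}, Q_X^unif × Q_Z) + (1/2)·√( (γ·|K|/|X|)·E_{(X,Z)~P_{XZ}}[ exp(−|ı(X;Z) − log γ|) ] ). -/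
/-!
Let `U = Q_X^unif × Q_Z` and split `P_{XZ} = P₁ + P₂` with `P₁ = min(P_{XZ}, γU)` and
`P₂ = (P_{XZ} − γU)⁺`, so that `Σ P₂ = E_γ(P_{XZ}, U)`. For every hash `g`, the part `P₂`
moves the security index by at most its mass. For `P₁`, Cauchy–Schwarz with weights
`Q_Z(z)/|K|` and then Jensen for `√` over `G` reduce the claim to a bound on the expected
squared deviation of the fiber sums of `P₁(·, z)` from their uniform average; the collision
bound makes it at most `Σ_x P₁(x, z)²`. Finally `|K|·P₁²/Q_Z = (γ|K|/|X|)·P_{XZ}·exp(−|ı − log γ|)`,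
because `min(p, γu)²/(γu) = p·min(t, 1/t)` with `t = p/(γu) = exp(ı − log γ)`.
-/

open Finset

noncomputable section

/-- Total variation distance between two finitely supported distributions. -/
def tv {A : Type*} [Fintype A] (P Q : A → ℝ) : ℝ := (1 / 2) * ∑ a, |P a - Q a|

/-- The `E_γ` metric `E_γ(P,Q) = ∑_a max (P a − γ·Q a) 0`. -/
def Egamma {A : Type*} [Fintype A] (γ : ℝ) (P Q : A → ℝ) : ℝ :=
  ∑ a, max (P a - γ * Q a) 0

open Real

section FiberDeviation

variable {X K : Type*} [Fintype X] [Fintype K] [DecidableEq K]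

/-- At a fixed `z`, `fiberDeviation g (fun x => P_{XZ} (x, z))` is
`P_{g(X)Z}(·, z) - Q_K^unif × P_Z(·, z)`. -/
def fiberDeviation (g : X → K) (f : X → ℝ) (k : K) : ℝ :=
  ∑ x with g x = k, f x - (Fintype.card K : ℝ)⁻¹ * ∑ x, f x

lemma fiberDeviation_add (g : X → K) (f₁ f₂ : X → ℝ) (k : K) :
    fiberDeviation g (f₁ + f₂) k = fiberDeviation g f₁ k + fiberDeviation g f₂ k := by
  simp only [fiberDeviation, Pi.add_apply, sum_add_distrib]
  ring

lemma sum_abs_fiberDeviation_le [Nonempty K] (g : X → K) {f : X → ℝ} (hf : 0 ≤ f) :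
    ∑ k, |fiberDeviation g f k| ≤ 2 * ∑ x, f x := by
  have hc : (Fintype.card K : ℝ) ≠ 0 := by positivity
  calc ∑ k, |fiberDeviation g f k|
      ≤ ∑ k, (∑ x with g x = k, f x + (Fintype.card K : ℝ)⁻¹ * ∑ x, f x) := by
        refine sum_le_sum fun k _ => abs_sub_le_iff.2 ⟨?_, ?_⟩
        · have : 0 ≤ (Fintype.card K : ℝ)⁻¹ * ∑ x, f x :=
            mul_nonneg (by positivity) (sum_nonneg fun x _ => hf x)
          linarith
        · have : 0 ≤ ∑ x with g x = k, f x := sum_nonneg fun x _ => hf x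
          linarith
    _ = 2 * ∑ x, f x := by
        rw [sum_add_distrib, sum_fiberwise, sum_const, card_univ, nsmul_eq_mul, ← mul_assoc,
          mul_inv_cancel₀ hc]
        ring

lemma sum_sq_fiberDeviation [Nonempty K] (g : X → K) (f : X → ℝ) :
    ∑ k, fiberDeviation g f k ^ 2 =
      ∑ x, f x * ∑ y with g y = g x, f y - (Fintype.card K : ℝ)⁻¹ * (∑ x, f x) ^ 2 := by
  have hc : (Fintype.card K : ℝ) ≠ 0 := by positivity
  have hF : ∑ k, (∑ x with g x = k, f x) ^ 2 = ∑ x, f x * ∑ y with g y = g x, f y := by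
    calc ∑ k, (∑ x with g x = k, f x) ^ 2
        = ∑ k, ∑ x with g x = k, f x * ∑ y with g y = g x, f y := by
          refine sum_congr rfl fun k _ => ?_
          rw [sq, sum_mul]
          exact sum_congr rfl fun x hx => by rw [(mem_filter.1 hx).2]
      _ = ∑ x, f x * ∑ y with g y = g x, f y := sum_fiberwise univ g _
  simp only [fiberDeviation, sub_sq, sum_add_distrib, sum_sub_distrib, hF]
  rw [← sum_mul, ← mul_sum, sum_fiberwise, sum_const, card_univ, nsmul_eq_mul]
  field_simp
  ring

lemma sum_mul_sum_sq_fiberDeviation_le [DecidableEq X] [Nonempty K] {μ : (X → K) → ℝ}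
    (hμ : ∑ g, μ g = 1)
    (hcoll : ∀ x₁ x₂ : X, x₁ ≠ x₂ → ∑ g with g x₁ = g x₂, μ g ≤ (Fintype.card K : ℝ)⁻¹)
    {f : X → ℝ} (hf : 0 ≤ f) :
    ∑ g, μ g * ∑ k, fiberDeviation g f k ^ 2 ≤ ∑ x, f x ^ 2 := by
  have hpair : ∀ x y, (∑ g with g x = g y, μ g) * (f x * f y)
      ≤ (Fintype.card K : ℝ)⁻¹ * (f x * f y) + if x = y then f x ^ 2 else 0 := by
    intro x y
    have hfxy : 0 ≤ f x * f y := mul_nonneg (hf x) (hf y)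
    by_cases hxy : x = y
    · subst hxy
      have : 0 ≤ (Fintype.card K : ℝ)⁻¹ * (f x * f x) := by positivity
      simp only [filter_true, hμ, if_true]
      nlinarith
    · rw [if_neg hxy, add_zero]
      exact mul_le_mul_of_nonneg_right (hcoll x y hxy) hfxy
  have hswap : ∑ g, μ g * ∑ x, f x * ∑ y with g y = g x, f y
      = ∑ x, ∑ y, (∑ g with g x = g y, μ g) * (f x * f y) := by
    simp only [sum_filter, mul_sum, sum_mul]
    rw [sum_comm]
    refine sum_congr rfl fun x _ => ?_
    rw [sum_comm]
    refine sum_congr rfl fun y _ => sum_congr rfl fun g _ => ?_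
    simp only [eq_comm (a := g y)]
    split_ifs <;> ring
  calc ∑ g, μ g * ∑ k, fiberDeviation g f k ^ 2
      = ∑ g, μ g * ∑ x, f x * ∑ y with g y = g x, f y
        - (Fintype.card K : ℝ)⁻¹ * (∑ x, f x) ^ 2 := by
        simp only [sum_sq_fiberDeviation, mul_sub, sum_sub_distrib, ← sum_mul, hμ, one_mul]
    _ ≤ ∑ x, ∑ y, ((Fintype.card K : ℝ)⁻¹ * (f x * f y) + if x = y then f x ^ 2 else 0)
        - (Fintype.card K : ℝ)⁻¹ * (∑ x, f x) ^ 2 := by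
        rw [hswap]
        gcongr with x _ y _
        exact hpair x y
    _ = ∑ x, f x ^ 2 := by
        simp only [sum_add_distrib, sum_ite_eq, mem_univ, if_true, ← mul_sum, sq, sum_mul]
        ring

end FiberDeviation

lemma sum_abs_le_sqrt_sum_sq_div {ι : Type*} (s : Finset ι) (a : ι → ℝ) {w : ι → ℝ}
    (hw : ∀ i ∈ s, 0 < w i) (hw1 : ∑ i ∈ s, w i = 1) :
    ∑ i ∈ s, |a i| ≤ √(∑ i ∈ s, a i ^ 2 / w i) := by
  have h := sq_sum_div_le_sum_sq_div s (fun i => |a i|) hw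
  simp only [hw1, div_one, sq_abs] at h
  exact (le_abs_self _).trans (abs_le_sqrt h)

lemma sum_mul_sqrt_le_sqrt_sum_mul {ι : Type*} (s : Finset ι) {μ W : ι → ℝ}
    (hμ : ∀ i ∈ s, 0 ≤ μ i) (hμ1 : ∑ i ∈ s, μ i = 1) (hW : ∀ i ∈ s, 0 ≤ W i) :
    ∑ i ∈ s, μ i * √(W i) ≤ √(∑ i ∈ s, μ i * W i) :=
  strictConcaveOn_sqrt.concaveOn.le_map_sum hμ hμ1 hW

lemma min_mul_sq_div_eq_mul_exp_neg_abs_log {p u γ : ℝ} (hp : 0 ≤ p) (hu : 0 < u)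
    (hγ : 0 < γ) :
    min p (γ * u) ^ 2 / u = γ * p * exp (-|log (p / u) - log γ|) := by
  rcases hp.eq_or_lt with rfl | hp
  · simp [(mul_pos hγ hu).le]
  have hlog : log (p / u) - log γ = log (p / (γ * u)) := by
    rw [log_div hp.ne' hu.ne', log_div hp.ne' (by positivity), log_mul hγ.ne' hu.ne']
    ring
  have ht : 0 < p / (γ * u) := by positivity
  rw [hlog]
  rcases le_total p (γ * u) with hle | hge
  · rw [min_eq_left hle, abs_of_nonpos (log_nonpos ht.le ((div_le_one (by positivity)).2 hle)),
      neg_neg, exp_log ht]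
    field_simp
  · rw [min_eq_right hge, abs_of_nonneg (log_nonneg ((one_le_div (by positivity)).2 hge)),
      exp_neg, exp_log ht]
    field_simp

lemma sum_sum_abs_le_sqrt_sum_mul_sum_sq {K Z : Type*} [Fintype K] [Fintype Z] [Nonempty K]
    (a : Z → K → ℝ) {Q : Z → ℝ} (hQ : ∀ z, 0 < Q z) (hQ1 : ∑ z, Q z = 1) :
    ∑ z, ∑ k, |a z k| ≤ √(∑ z, (Fintype.card K / Q z) * ∑ k, a z k ^ 2) := by
  have hc : (0 : ℝ) < Fintype.card K := by positivity
  have h := sum_abs_le_sqrt_sum_sq_div univ (fun q : Z × K => a q.1 q.2)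
    (w := fun q => Q q.1 / Fintype.card K) (fun q _ => div_pos (hQ q.1) hc) (by
      rw [Fintype.sum_prod_type]
      simp only [sum_const, card_univ, nsmul_eq_mul]
      rw [← hQ1]
      refine sum_congr rfl fun z _ => ?_
      field_simp)
  simp only [Fintype.sum_prod_type] at h
  convert h using 3 with z
  rw [mul_sum]
  refine sum_congr rfl fun k _ => ?_
  field_simp

lemma sum_weighted_sq_min_eq_sum_mul_exp {X Z : Type*} [Fintype X] [Fintype Z] [Nonempty X]
    {P : X × Z → ℝ} (hP : 0 ≤ P) {Q : Z → ℝ} (hQ : ∀ z, 0 < Q z) {γ : ℝ} (hγ : 0 < γ) (c : ℝ) :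
    ∑ z, (c / Q z) * ∑ x, min (P (x, z)) (γ * ((Fintype.card X : ℝ)⁻¹ * Q z)) ^ 2
      = γ * c / Fintype.card X * ∑ q, P q *
          exp (-|log (P q / ((Fintype.card X : ℝ)⁻¹ * Q q.2)) - log γ|) := by
  have hn : (0 : ℝ) < Fintype.card X := by positivity
  rw [Fintype.sum_prod_type_right, mul_sum]
  refine sum_congr rfl fun z _ => ?_
  rw [mul_sum, mul_sum]
  refine sum_congr rfl fun x _ => ?_
  have hu : 0 < (Fintype.card X : ℝ)⁻¹ * Q z := mul_pos (inv_pos.2 hn) (hQ z)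
  calc c / Q z * min (P (x, z)) (γ * ((Fintype.card X : ℝ)⁻¹ * Q z)) ^ 2
      = c / Fintype.card X * (min (P (x, z)) (γ * ((Fintype.card X : ℝ)⁻¹ * Q z)) ^ 2
          / ((Fintype.card X : ℝ)⁻¹ * Q z)) := by
        field_simp
    _ = _ := by
        rw [min_mul_sq_div_eq_mul_exp_neg_abs_log (hP (x, z)) hu hγ]
        ring

section Hashing

variable {X K Z : Type*} [Fintype X] [Fintype K] [Fintype Z] [DecidableEq K] [Nonempty K]

lemma tv_hash_le_of_eq_add (g : X → K) {P P₁ P₂ : X × Z → ℝ} (hP : P = P₁ + P₂) (hP₂ : 0 ≤ P₂) :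
    tv (fun q : K × Z => ∑ x with g x = q.1, P (x, q.2))
        (fun q : K × Z => (Fintype.card K : ℝ)⁻¹ * ∑ x, P (x, q.2))
      ≤ ∑ q, P₂ q + 1 / 2 * ∑ z, ∑ k, |fiberDeviation g (fun x => P₁ (x, z)) k| := by
  have hsplit : ∀ z, (fun x => P (x, z)) = (fun x => P₁ (x, z)) + fun x => P₂ (x, z) :=
    fun z => by rw [hP]; rfl
  have hP₂sum : ∑ z, ∑ k, |fiberDeviation g (fun x => P₂ (x, z)) k| ≤ 2 * ∑ q, P₂ q := by
    rw [Fintype.sum_prod_type_right, mul_sum]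
    exact sum_le_sum fun z _ => sum_abs_fiberDeviation_le g fun x => hP₂ (x, z)
  calc tv (fun q : K × Z => ∑ x with g x = q.1, P (x, q.2))
        (fun q : K × Z => (Fintype.card K : ℝ)⁻¹ * ∑ x, P (x, q.2))
      = 1 / 2 * ∑ z, ∑ k, |fiberDeviation g (fun x => P (x, z)) k| := by
        rw [tv, Fintype.sum_prod_type_right]
        rfl
    _ ≤ 1 / 2 * ∑ z, ∑ k, (|fiberDeviation g (fun x => P₁ (x, z)) k|
          + |fiberDeviation g (fun x => P₂ (x, z)) k|) := by
        gcongr with z _ k _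
        rw [hsplit, fiberDeviation_add]
        exact abs_add_le _ _
    _ ≤ ∑ q, P₂ q + 1 / 2 * ∑ z, ∑ k, |fiberDeviation g (fun x => P₁ (x, z)) k| := by
        simp only [sum_add_distrib]
        linarith

lemma sum_mul_sum_weighted_sq_fiberDeviation_le [DecidableEq X] {μ : (X → K) → ℝ}
    (hμ : ∑ g, μ g = 1)
    (hcoll : ∀ x₁ x₂ : X, x₁ ≠ x₂ → ∑ g with g x₁ = g x₂, μ g ≤ (Fintype.card K : ℝ)⁻¹)
    {f : X × Z → ℝ} (hf : 0 ≤ f) {w : Z → ℝ} (hw : 0 ≤ w) :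
    ∑ g, μ g * ∑ z, w z * ∑ k, fiberDeviation g (fun x => f (x, z)) k ^ 2
      ≤ ∑ z, w z * ∑ x, f (x, z) ^ 2 := by
  calc ∑ g, μ g * ∑ z, w z * ∑ k, fiberDeviation g (fun x => f (x, z)) k ^ 2
      = ∑ z, w z * ∑ g, μ g * ∑ k, fiberDeviation g (fun x => f (x, z)) k ^ 2 := by
        simp only [mul_sum]
        rw [sum_comm]
        exact sum_congr rfl fun z _ => sum_congr rfl fun g _ => sum_congr rfl fun k _ => by ring
    _ ≤ ∑ z, w z * ∑ x, f (x, z) ^ 2 := by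
        gcongr with z _
        · exact hw z
        · exact sum_mul_sum_sq_fiberDeviation_le hμ hcoll fun x => hf (x, z)

end Hashing

theorem random_hash_privacy_amplification_general
    {X K Z : Type*} [Fintype X] [Fintype K] [Fintype Z]
    [Nonempty X] [Nonempty K] [DecidableEq X] [DecidableEq K]
    (PXZ : X × Z → ℝ)
    (hpos : ∀ q, 0 ≤ PXZ q)
    (μ : (X → K) → ℝ)
    (hμpos : ∀ g, 0 ≤ μ g) (hμsum : ∑ g, μ g = 1)
    (hcoll : ∀ x₁ x₂ : X, x₁ ≠ x₂ →
      ∑ g ∈ univ.filter (fun g : X → K => g x₁ = g x₂), μ g ≤ (Fintype.card K : ℝ)⁻¹)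
    (γ : ℝ) (hγ : 0 < γ)
    (QZ : Z → ℝ) (hQpos : ∀ z, 0 < QZ z) (hQsum : ∑ z, QZ z = 1) :
    ∑ g : X → K, μ g *
        tv (fun q : K × Z => ∑ x ∈ univ.filter (fun x => g x = q.1), PXZ (x, q.2))
           (fun q : K × Z => (Fintype.card K : ℝ)⁻¹ * ∑ x, PXZ (x, q.2))
      ≤ Egamma γ PXZ (fun q : X × Z => (Fintype.card X : ℝ)⁻¹ * QZ q.2)
        + (1 / 2) * Real.sqrt ((γ * (Fintype.card K : ℝ) / (Fintype.card X : ℝ)) *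
            ∑ q : X × Z, PXZ q *
              Real.exp (-|Real.log (PXZ q / ((Fintype.card X : ℝ)⁻¹ * QZ q.2))
                - Real.log γ|)) := by
  set U : X × Z → ℝ := fun q => (Fintype.card X : ℝ)⁻¹ * QZ q.2
  set P₁ : X × Z → ℝ := fun q => min (PXZ q) (γ * U q)
  set W : (X → K) → ℝ := fun g =>
    ∑ z, (Fintype.card K / QZ z) * ∑ k, fiberDeviation g (fun x => P₁ (x, z)) k ^ 2
  have hsplit : PXZ = P₁ + fun q => max (PXZ q - γ * U q) 0 := funext fun q => by
    simp only [P₁, Pi.add_apply]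
    grind
  have hP₁ : 0 ≤ P₁ := fun q => le_min (hpos q) (by positivity [hQpos q.2])
  have hw : ∀ z, 0 ≤ (Fintype.card K : ℝ) / QZ z := fun z => by positivity [hQpos z]
  have hW : ∀ g, 0 ≤ W g := fun g =>
    sum_nonneg fun z _ => mul_nonneg (hw z) (sum_nonneg fun k _ => sq_nonneg _)
  have hEW : ∑ g, μ g * W g ≤ (γ * (Fintype.card K : ℝ) / (Fintype.card X : ℝ)) *
      ∑ q, PXZ q * exp (-|log (PXZ q / U q) - log γ|) :=
    (sum_mul_sum_weighted_sq_fiberDeviation_le hμsum hcoll hP₁ hw).trans_eq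
      (sum_weighted_sq_min_eq_sum_mul_exp hpos hQpos hγ _)
  calc _ ≤ ∑ g, μ g * (Egamma γ PXZ U + 1 / 2 * √(W g)) := by
        refine sum_le_sum fun g _ => mul_le_mul_of_nonneg_left ?_ (hμpos g)
        refine (tv_hash_le_of_eq_add g hsplit fun q => le_max_right _ _).trans ?_
        exact add_le_add le_rfl (mul_le_mul_of_nonneg_left
          (sum_sum_abs_le_sqrt_sum_mul_sum_sq _ hQpos hQsum) (by norm_num))
    _ = Egamma γ PXZ U + 1 / 2 * ∑ g, μ g * √(W g) := by
        rw [mul_sum]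
        simp only [mul_add, sum_add_distrib, ← sum_mul, hμsum, one_mul, mul_left_comm (μ _)]
    _ ≤ Egamma γ PXZ U + 1 / 2 * √(∑ g, μ g * W g) := by
        gcongr
        exact sum_mul_sqrt_le_sqrt_sum_mul univ (fun g _ => hμpos g) hμsum fun g _ => hW g
    _ ≤ _ := add_le_add le_rfl (mul_le_mul_of_nonneg_left (sqrt_le_sqrt hEW) (by norm_num))

/-- random universal₂ hashing: let `G` be a random function from `X`
to `K`, given by a probability distribution `μ` on the (finite) function space
`X → K`, satisfying the collision bound `P[G(x₁) = G(x₂)] ≤ 1/|K|` for all `x₁ ≠ x₂`.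
Then for every `γ > 0`,
`E_G[S(G(X)|Z)] ≤ E_γ(P_{XZ}, Q_X^unif × Q_Z)
  + (1/2)·√((γ·|K|/|X|)·E_{P_{XZ}}[exp(−|ı(X;Z) − log γ|)])`. -/
theorem random_hash_privacy_amplification
    {X K Z : Type*} [Fintype X] [Fintype K] [Fintype Z]
    [Nonempty X] [Nonempty K] [DecidableEq X] [DecidableEq K]
    (PXZ : X × Z → ℝ)
    (hpos : ∀ q, 0 ≤ PXZ q) (hsum : ∑ q, PXZ q = 1)
    (μ : (X → K) → ℝ)
    (hμpos : ∀ g, 0 ≤ μ g) (hμsum : ∑ g, μ g = 1)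
    (hcoll : ∀ x₁ x₂ : X, x₁ ≠ x₂ →
      ∑ g ∈ univ.filter (fun g : X → K => g x₁ = g x₂), μ g ≤ (Fintype.card K : ℝ)⁻¹)
    (γ : ℝ) (hγ : 0 < γ)
    (QZ : Z → ℝ) (hQpos : ∀ z, 0 < QZ z) (hQsum : ∑ z, QZ z = 1) :
    ∑ g : X → K, μ g *
        tv (fun q : K × Z => ∑ x ∈ univ.filter (fun x => g x = q.1), PXZ (x, q.2))
           (fun q : K × Z => (Fintype.card K : ℝ)⁻¹ * ∑ x, PXZ (x, q.2))
      ≤ Egamma γ PXZ (fun q : X × Z => (Fintype.card X : ℝ)⁻¹ * QZ q.2)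
        + (1 / 2) * Real.sqrt ((γ * (Fintype.card K : ℝ) / (Fintype.card X : ℝ)) *
            ∑ q : X × Z, PXZ q *
              Real.exp (-|Real.log (PXZ q / ((Fintype.card X : ℝ)⁻¹ * QZ q.2))
                - Real.log γ|)) :=
  random_hash_privacy_amplification_general PXZ hpos μ hμpos hμsum hcoll γ hγ QZ hQpos hQsum
end
end

section
/- Let X and Z be finite sets, and let P_{XZ} be a probability distribution on X × Z such that its X-marginal P_X satisfies P_X(x) > 0 for every x ∈ X; let P_{Z|X}(z|x) := P_{XZ}(x,z)/P_X(x) and let P_Z be the Z-marginal of P_{XZ}. Let 𝒜 = (X₁,...,X_L) be i.i.d. P_X-distributed random variables and set P_{Z|𝒜}(z) := (1/L)·Σ_{i=1}^{L} P_{Z|X}(z|Xᵢ). Then for every γ > 0 and every fully supported probability distribution Q_Z on Z, E[ d(P_{Z|𝒜}, P_Z) ] ≤ E_γ(P_{XZ}, Q_X^unif × Q_Z) + (1/2)·√( (γ/L)·E_{(X̃,Z)~Q_X^unif·P_{Z|X}}[ exp(−|ı(X̃;Z) − log γ|) ] ), where the expectation in the second term is with respect to X̃ uniform on X and Z ~ P_{Z|X}(·|X̃).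 -/
/-!
Split `P_{XZ} = min(P_{XZ}, γ·Q) + (P_{XZ} - γ·Q)⁺` with `Q = Q_X^unif × Q_Z`, and accordingly
`P_{Z|X} = A + B`. For the excess kernel `B` the deviation of the codebook average from its mean is
bounded crudely by the sum of the two (nonnegative) terms, each of expectation equal to the excess
mass, which yields `E_γ`. For the truncated kernel `A` the codebook average is an empirical mean of
`L` i.i.d. terms, so its expected absolute deviation is at most `√(E[A²]/L)`. The identity
`min(a, γb)² = γ·b·a·exp(-|log(a/b) - log γ|)` turns `E[A²]` into the exponential term, and
Cauchy–Schwarz against `Q_Z` gathers the square roots over `z`.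
-/

open Finset

noncomputable section

theorem sum_mul_abs_le_sqrt_sum_mul_sq {A : Type*} [Fintype A] {w : A → ℝ} (hw : ∀ a, 0 ≤ w a)
    (hw1 : ∑ a, w a = 1) (Y : A → ℝ) :
    ∑ a, w a * |Y a| ≤ √(∑ a, w a * Y a ^ 2) := by
  have h := Real.sum_sqrt_mul_sqrt_le univ hw fun a => mul_nonneg (hw a) (sq_nonneg (Y a))
  have h_term (a : A) : √(w a) * √(w a * Y a ^ 2) = w a * |Y a| := by
    rw [Real.sqrt_mul (hw a), Real.sqrt_sq_eq_abs, ← mul_assoc, Real.mul_self_sqrt (hw a)]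
  simpa [h_term, hw1] using h

theorem sum_sqrt_mul_le_sqrt_sum {A : Type*} [Fintype A] {u c : A → ℝ} (hu : ∀ a, 0 ≤ u a)
    (hu1 : ∑ a, u a = 1) (hc : ∀ a, 0 ≤ c a) :
    ∑ a, √(u a * c a) ≤ √(∑ a, c a) := by
  simpa [Real.sqrt_mul (hu _), hu1] using Real.sum_sqrt_mul_sqrt_le univ hu hc

def empiricalMean {X : Type*} {L : ℕ} (f : X → ℝ) (v : Fin L → X) : ℝ :=
  (L : ℝ)⁻¹ * ∑ i, f (v i)

theorem empiricalMean_add {X : Type*} {L : ℕ} (f g : X → ℝ) (v : Fin L → X) :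
    empiricalMean (fun x => f x + g x) v = empiricalMean f v + empiricalMean g v := by
  simp [empiricalMean, sum_add_distrib, mul_add]

section Codebook

variable {X : Type*} [Fintype X] {L : ℕ}

theorem sum_prod_mul_prod (P : X → ℝ) (h : Fin L → X → ℝ) :
    ∑ v : Fin L → X, (∏ k, P (v k)) * ∏ k, h k (v k) = ∏ k, ∑ x, P x * h k x := by
  simp_rw [← prod_mul_distrib]
  exact (Fintype.prod_sum fun k x => P x * h k x).symm

variable {P : X → ℝ}

theorem sum_prod_eq_one (hP : ∑ x, P x = 1) : ∑ v : Fin L → X, ∏ k, P (v k) = 1 := by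
  simpa [hP] using sum_prod_mul_prod P (fun _ _ => (1 : ℝ))

theorem sum_prod_mul_apply (hP : ∑ x, P x = 1) (f : X → ℝ) (i : Fin L) :
    ∑ v : Fin L → X, (∏ k, P (v k)) * f (v i) = ∑ x, P x * f x := by
  have h := sum_prod_mul_prod (L := L) P (fun k => if k = i then f else 1)
  simpa [ite_apply, hP] using h

theorem sum_prod_mul_apply_mul_apply (hP : ∑ x, P x = 1) (f g : X → ℝ) {i j : Fin L}
    (hij : i ≠ j) :
    ∑ v : Fin L → X, (∏ k, P (v k)) * (f (v i) * g (v j))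
      = (∑ x, P x * f x) * ∑ x, P x * g x := by
  set h : Fin L → X → ℝ := fun k => (if k = i then f else 1) * (if k = j then g else 1)
  have h_prod (v : Fin L → X) : ∏ k, h k (v k) = f (v i) * g (v j) := by
    simp only [h, Pi.mul_apply, prod_mul_distrib]
    simp [ite_apply]
  have h_sum (k : Fin L) : ∑ x, P x * h k x
      = (if k = i then ∑ x, P x * f x else 1) * (if k = j then ∑ x, P x * g x else 1) := by
    by_cases hki : k = i <;> by_cases hkj : k = j <;> simp_all [h]
  simp_rw [← h_prod, sum_prod_mul_prod, h_sum, prod_mul_distrib]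
  simp

theorem sum_prod_mul_sq_sum_of_centered (hP : ∑ x, P x = 1) (g : X → ℝ)
    (hg : ∑ x, P x * g x = 0) :
    ∑ v : Fin L → X, (∏ k, P (v k)) * (∑ i, g (v i)) ^ 2 = L * ∑ x, P x * g x ^ 2 := by
  have h_cov (i j : Fin L) : ∑ v : Fin L → X, (∏ k, P (v k)) * (g (v i) * g (v j))
      = if i = j then ∑ x, P x * g x ^ 2 else 0 := by
    split_ifs with hij
    · simpa [hij, sq] using sum_prod_mul_apply hP (fun x => g x * g x) j
    · simp [sum_prod_mul_apply_mul_apply hP g g hij, hg]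
  calc ∑ v : Fin L → X, (∏ k, P (v k)) * (∑ i, g (v i)) ^ 2
      = ∑ i, ∑ j, ∑ v : Fin L → X, (∏ k, P (v k)) * (g (v i) * g (v j)) := by
        simp_rw [sq, sum_mul_sum, mul_sum]
        rw [sum_comm]
        exact sum_congr rfl fun i _ => sum_comm
    _ = L * ∑ x, P x * g x ^ 2 := by simp [h_cov]

theorem sum_prod_mul_sq_empiricalMean_sub_le (hL : 0 < L) (hP : ∑ x, P x = 1) (f : X → ℝ) :
    ∑ v : Fin L → X, (∏ k, P (v k)) * (empiricalMean f v - ∑ x, P x * f x) ^ 2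
      ≤ (∑ x, P x * f x ^ 2) / L := by
  set μ := ∑ x, P x * f x
  have hL' : (L : ℝ) ≠ 0 := by positivity
  have h_center : ∑ x, P x * (f x - μ) = 0 := by
    simp [mul_sub, sum_sub_distrib, ← sum_mul, hP, μ]
  have h_mean (v : Fin L → X) : empiricalMean f v - μ = (L : ℝ)⁻¹ * ∑ i, (f (v i) - μ) := by
    simp [empiricalMean, sum_sub_distrib, mul_sub, hL']
  have h_var : ∑ x, P x * (f x - μ) ^ 2 = ∑ x, P x * f x ^ 2 - μ ^ 2 := by
    have : ∀ x, P x * (f x - μ) ^ 2 = P x * f x ^ 2 - 2 * μ * (P x * f x) + μ ^ 2 * P x := by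
      intro x; ring
    simp_rw [this, sum_add_distrib, sum_sub_distrib, ← mul_sum, hP]
    ring
  calc ∑ v : Fin L → X, (∏ k, P (v k)) * (empiricalMean f v - μ) ^ 2
      = (L : ℝ)⁻¹ ^ 2 * ∑ v : Fin L → X, (∏ k, P (v k)) * (∑ i, (f (v i) - μ)) ^ 2 := by
        simp_rw [h_mean]
        rw [mul_sum]
        exact sum_congr rfl fun v _ => by ring
    _ = (∑ x, P x * f x ^ 2 - μ ^ 2) / L := by
        rw [sum_prod_mul_sq_sum_of_centered hP _ h_center, h_var]
        field_simp
    _ ≤ (∑ x, P x * f x ^ 2) / L := by gcongr; nlinarith [sq_nonneg μ]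

theorem sum_prod_mul_empiricalMean (hL : 0 < L) (hP : ∑ x, P x = 1) (f : X → ℝ) :
    ∑ v : Fin L → X, (∏ k, P (v k)) * empiricalMean f v = ∑ x, P x * f x := by
  have hL' : (L : ℝ) ≠ 0 := by positivity
  calc ∑ v : Fin L → X, (∏ k, P (v k)) * empiricalMean f v
      = (L : ℝ)⁻¹ * ∑ i, ∑ v : Fin L → X, (∏ k, P (v k)) * f (v i) := by
        simp_rw [empiricalMean, mul_sum]
        rw [sum_comm]
        exact sum_congr rfl fun i _ => sum_congr rfl fun v _ => by ring
    _ = ∑ x, P x * f x := by simp [sum_prod_mul_apply hP, hL']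

theorem sum_prod_mul_abs_empiricalMean_sub_le (hL : 0 < L) (hP0 : ∀ x, 0 ≤ P x)
    (hP : ∑ x, P x = 1) (f : X → ℝ) :
    ∑ v : Fin L → X, (∏ k, P (v k)) * |empiricalMean f v - ∑ x, P x * f x|
      ≤ √((∑ x, P x * f x ^ 2) / L) :=
  (sum_mul_abs_le_sqrt_sum_mul_sq (fun v => prod_nonneg fun k _ => hP0 (v k))
    (sum_prod_eq_one hP) _).trans
    (Real.sqrt_le_sqrt (sum_prod_mul_sq_empiricalMean_sub_le hL hP f))

end Codebook

theorem sum_prod_mul_tv_empiricalMean_le {X Z : Type*} [Fintype X] [Fintype Z] {L : ℕ}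
    (hL : 0 < L) {P : X → ℝ} (hP0 : ∀ x, 0 ≤ P x) (hP : ∑ x, P x = 1) (A B : X → Z → ℝ)
    (hB : ∀ x z, 0 ≤ B x z) :
    ∑ v : Fin L → X, (∏ k, P (v k)) *
        tv (fun z => empiricalMean (fun x => A x z + B x z) v)
          (fun z => ∑ x, P x * (A x z + B x z))
      ≤ ∑ z, ∑ x, P x * B x z + 1 / 2 * ∑ z, √((∑ x, P x * A x z ^ 2) / L) := by
  have hw (v : Fin L → X) : 0 ≤ ∏ k, P (v k) := prod_nonneg fun k _ => hP0 (v k)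
  set dev : Z → (Fin L → X) → ℝ := fun z v =>
    |empiricalMean (fun x => A x z) v - ∑ x, P x * A x z|
      + (empiricalMean (fun x => B x z) v + ∑ x, P x * B x z)
  have h_dev (z : Z) (v : Fin L → X) :
      |empiricalMean (fun x => A x z + B x z) v - ∑ x, P x * (A x z + B x z)| ≤ dev z v := by
    have hBv : 0 ≤ empiricalMean (fun x => B x z) v :=
      mul_nonneg (by positivity) (sum_nonneg fun i _ => hB _ _)
    have hBP : 0 ≤ ∑ x, P x * B x z := sum_nonneg fun x _ => mul_nonneg (hP0 x) (hB x z)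
    rw [empiricalMean_add]
    simp only [mul_add, sum_add_distrib, dev]
    set a := empiricalMean (fun x => A x z) v - ∑ x, P x * A x z
    exact abs_le.mpr ⟨by linarith [neg_abs_le a], by linarith [le_abs_self a]⟩
  have h_exp_dev (z : Z) : ∑ v : Fin L → X, (∏ k, P (v k)) * dev z v
      ≤ √((∑ x, P x * A x z ^ 2) / L) + 2 * ∑ x, P x * B x z := by
    simp only [dev, mul_add, sum_add_distrib, ← sum_mul, sum_prod_eq_one hP,
      sum_prod_mul_empiricalMean hL hP]
    linarith [sum_prod_mul_abs_empiricalMean_sub_le hL hP0 hP fun x => A x z]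
  calc ∑ v : Fin L → X, (∏ k, P (v k)) *
        tv (fun z => empiricalMean (fun x => A x z + B x z) v)
          (fun z => ∑ x, P x * (A x z + B x z))
      ≤ ∑ v : Fin L → X, (∏ k, P (v k)) * (1 / 2 * ∑ z, dev z v) := by
        unfold tv
        gcongr with v _ z
        · exact hw v
        · exact h_dev z v
    _ = 1 / 2 * ∑ z, ∑ v : Fin L → X, (∏ k, P (v k)) * dev z v := by
        simp_rw [mul_sum]
        rw [sum_comm]
        exact sum_congr rfl fun z _ => sum_congr rfl fun v _ => by ring
    _ ≤ 1 / 2 * ∑ z, (√((∑ x, P x * A x z ^ 2) / L) + 2 * ∑ x, P x * B x z) := by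
        gcongr with z
        exact h_exp_dev z
    _ = ∑ z, ∑ x, P x * B x z + 1 / 2 * ∑ z, √((∑ x, P x * A x z ^ 2) / L) := by
        rw [sum_add_distrib, ← mul_sum]
        ring

theorem min_sq_eq_mul_exp_neg_abs_log_sub {γ a b : ℝ} (hγ : 0 < γ) (ha : 0 ≤ a) (hb : 0 < b) :
    min a (γ * b) ^ 2 = γ * b * a * Real.exp (-|Real.log (a / b) - Real.log γ|) := by
  rcases ha.eq_or_lt with rfl | ha
  · simp [min_eq_left (by positivity : 0 ≤ γ * b)]
  have hγb : 0 < γ * b := by positivity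
  rw [show Real.log (a / b) - Real.log γ = Real.log a - Real.log (γ * b) by
    rw [Real.log_div ha.ne' hb.ne', Real.log_mul hγ.ne' hb.ne']; ring]
  rcases le_total a (γ * b) with h | h
  · rw [abs_of_nonpos (sub_nonpos.mpr (Real.log_le_log ha h)), neg_neg, Real.exp_sub,
      Real.exp_log ha, Real.exp_log hγb, min_eq_left h]
    field_simp
  · rw [abs_of_nonneg (sub_nonneg.mpr (Real.log_le_log hγb h)), neg_sub, Real.exp_sub,
      Real.exp_log ha, Real.exp_log hγb, min_eq_right h]
    field_simp

theorem sum_sqrt_sum_mul_min_div_sq_le {X Z : Type*} [Fintype X] [Fintype Z]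
    {PXZ : X × Z → ℝ} (hpos : ∀ q, 0 ≤ PXZ q) {P : X → ℝ} (hP : ∀ x, 0 < P x)
    {QZ : Z → ℝ} (hQpos : ∀ z, 0 < QZ z) (hQsum : ∑ z, QZ z = 1) {c γ : ℝ} (hc : 0 < c)
    (hγ : 0 < γ) (L : ℕ) :
    ∑ z, √((∑ x, P x * (min (PXZ (x, z)) (γ * (c * QZ z)) / P x) ^ 2) / L)
      ≤ √(γ / L * ∑ q : X × Z, c * (PXZ q / P q.1) *
          Real.exp (-|Real.log (PXZ q / (c * QZ q.2)) - Real.log γ|)) := by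
  set S : Z → ℝ := fun z => ∑ x, c * (PXZ (x, z) / P x) *
    Real.exp (-|Real.log (PXZ (x, z) / (c * QZ z)) - Real.log γ|)
  have hS (z : Z) : 0 ≤ S z := sum_nonneg fun x _ => by
    have := hpos (x, z); have := hP x; positivity
  have h_term (z : Z) :
      (∑ x, P x * (min (PXZ (x, z)) (γ * (c * QZ z)) / P x) ^ 2) / L = QZ z * (γ / L * S z) := by
    simp only [S, sum_div, mul_sum]
    refine sum_congr rfl fun x _ => ?_
    have hPx : P x ≠ 0 := (hP x).ne'
    rw [div_pow, min_sq_eq_mul_exp_neg_abs_log_sub hγ (hpos _) (mul_pos hc (hQpos z))]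
    field_simp
  calc ∑ z, √((∑ x, P x * (min (PXZ (x, z)) (γ * (c * QZ z)) / P x) ^ 2) / L)
      = ∑ z, √(QZ z * (γ / L * S z)) := by simp only [h_term]
    _ ≤ √(∑ z, γ / L * S z) :=
        sum_sqrt_mul_le_sqrt_sum (fun z => (hQpos z).le) hQsum fun z => by
          have := hS z; positivity
    _ = _ := by rw [← mul_sum, Fintype.sum_prod_type, sum_comm]

/-- channel resolvability: for a codebook `𝒜 = (X₁,…,X_L)` of i.i.d.
`P_X`-distributed codewords,
`E[d(P_{Z|𝒜}, P_Z)] ≤ E_γ(P_{XZ}, Q_X^unif × Q_Z)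
  + (1/2)·√((γ/L)·E_{Q_X^unif·P_{Z|X}}[exp(−|ı(X̃;Z) − log γ|)])`,
where `P_X(x) = ∑_z P_{XZ}(x,z) > 0`, `P_{Z|X}(z|x) = P_{XZ}(x,z)/P_X(x)`, and
`ı(x;z) = log(P_{XZ}(x,z)/(Q_X^unif(x)·Q_Z(z)))`. -/
theorem channel_resolvability
    {X Z : Type*} [Fintype X] [Fintype Z] [Nonempty X]
    (PXZ : X × Z → ℝ)
    (hpos : ∀ q, 0 ≤ PXZ q) (hsum : ∑ q, PXZ q = 1)
    (hXpos : ∀ x, 0 < ∑ z, PXZ (x, z))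
    (PZX : X → Z → ℝ)
    (hPZX : ∀ x z, PZX x z = PXZ (x, z) / ∑ z', PXZ (x, z'))
    (PZ : Z → ℝ) (hPZ : ∀ z, PZ z = ∑ x, PXZ (x, z))
    (L : ℕ) (hL : 0 < L)
    (γ : ℝ) (hγ : 0 < γ)
    (QZ : Z → ℝ) (hQpos : ∀ z, 0 < QZ z) (hQsum : ∑ z, QZ z = 1) :
    ∑ v : Fin L → X, (∏ i, ∑ z, PXZ (v i, z)) *
        tv (fun z => (L : ℝ)⁻¹ * ∑ i, PZX (v i) z) PZ
      ≤ Egamma γ PXZ (fun q : X × Z => (Fintype.card X : ℝ)⁻¹ * QZ q.2)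
        + (1 / 2) * Real.sqrt ((γ / (L : ℝ)) *
            ∑ q : X × Z, (Fintype.card X : ℝ)⁻¹ * PZX q.1 q.2 *
              Real.exp (-|Real.log (PXZ q / ((Fintype.card X : ℝ)⁻¹ * QZ q.2))
                - Real.log γ|)) := by
  obtain rfl : PZX = fun x z => PXZ (x, z) / ∑ z', PXZ (x, z') := funext₂ hPZX
  obtain rfl : PZ = fun z => ∑ x, PXZ (x, z) := funext hPZ
  set P : X → ℝ := fun x => ∑ z, PXZ (x, z)
  set Q : Z → ℝ := fun z => (Fintype.card X : ℝ)⁻¹ * QZ z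
  have hP : ∑ x, P x = 1 := by rw [← hsum, Fintype.sum_prod_type]
  set A : X → Z → ℝ := fun x z => min (PXZ (x, z)) (γ * Q z) / P x
  set B : X → Z → ℝ := fun x z => max (PXZ (x, z) - γ * Q z) 0 / P x
  have h_split (x : X) (z : Z) : P x * (A x z + B x z) = PXZ (x, z) := by
    have : min (PXZ (x, z)) (γ * Q z) + max (PXZ (x, z) - γ * Q z) 0 = PXZ (x, z) := by
      rcases le_total (PXZ (x, z)) (γ * Q z) with h | h <;> simp [h]
    rw [← add_div, this, mul_div_cancel₀ _ (hXpos x).ne']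
  have h_excess : ∑ z, ∑ x, P x * B x z = Egamma γ PXZ (fun q => Q q.2) := by
    rw [Egamma, Fintype.sum_prod_type, sum_comm]
    exact sum_congr rfl fun x _ => sum_congr rfl fun z _ => mul_div_cancel₀ _ (hXpos x).ne'
  calc _ = ∑ v : Fin L → X, (∏ i, P (v i)) *
          tv (fun z => empiricalMean (fun x => A x z + B x z) v)
            (fun z => ∑ x, P x * (A x z + B x z)) := by
        have h_kernel (x : X) (z : Z) : PXZ (x, z) / ∑ z', PXZ (x, z') = A x z + B x z := by
          rw [← h_split, mul_div_cancel_left₀ _ (hXpos x).ne']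
        simp only [h_kernel, h_split]
        rfl
    _ ≤ ∑ z, ∑ x, P x * B x z + 1 / 2 * ∑ z, √((∑ x, P x * A x z ^ 2) / L) :=
        sum_prod_mul_tv_empiricalMean_le hL (fun x => (hXpos x).le) hP A B
          fun x z => div_nonneg (le_max_right _ _) (hXpos x).le
    _ ≤ _ := by
        rw [h_excess]
        gcongr
        exact sum_sqrt_sum_mul_min_div_sq_le hpos hXpos hQpos hQsum (by positivity) hγ L
end
end

section
/- Let C be a finite set of cardinality L·M (L, M positive integers), Z a finite set, P_{Z|X} a channel from C to Z, and P_Z(z) := (1/|C|)·Σ_{x∈C} P_{Z|X}(z|x). Let P_e : C → [0,1] be any function with (1/|C|)·Σ_{x∈C} P_e(x) = ε₀, and let G be uniformly distributed over the set of all functions g : C → {1,...,M} with |g⁻¹(m)| = L for every m. Then for every r > 0, P[ { max_m d(P_{Z|G⁻¹(m)}, P_Z) ≥ r + μ } ∪ { max_m (1/L)·Σ_{x∈G⁻¹(m)} P_e(x) ≥ r + ε₀ } ] ≤ 2M·e^{−2Lr²}, where μ := E[ d(P_{Z|𝒜}, P_Z) ] with 𝒜 = (X̄₁,...,X̄_L)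 i.i.d. uniform on C and P_{Z|𝒜}(z) := (1/L)·Σᵢ P_{Z|X}(z|X̄ᵢ). -/
open Finset
open scoped Classical

noncomputable section

/-!
Fix a fibre `m`. For a uniformly random balanced `G`, the fibre `G⁻¹(m)` is distributed as the
range of a uniformly random embedding `Fin L ↪ C`: balanced functions and embeddings each form a
single orbit of `Equiv.Perm C`. Leakage and error are both of the form `φ (∑ x ∈ G⁻¹(m), h x)`
with `φ` convex and with differences at most `1/L` when one summand is exchanged. Hoeffding's
comparison of sampling without and with replacement (Jensen's inequality over the rotations of
`Fin L`) bounds exponential moments over embeddings by those over i.i.d. tuples, and McDiarmid's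
argument (Hoeffding's lemma one coordinate at a time) bounds the latter by `exp (t 𝔼φ + t²/(8L))`.
Chernoff's bound with `t = 4Lr` gives `exp (-2Lr²)` for each fibre and each of the two events, and
a union bound over these `2M` events concludes.
-/

open Real
open scoped BigOperators

theorem expect_exp_mul_le_of_mem_Icc {ι : Type*} [Fintype ι] [Nonempty ι] (X : ι → ℝ) {a b : ℝ}
    (hX : ∀ i, X i ∈ Set.Icc a b) (t : ℝ) :
    𝔼 i, exp (t * X i) ≤ exp (t * 𝔼 i, X i + t ^ 2 * (b - a) ^ 2 / 8) := by
  let _ : MeasurableSpace ι := ⊤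
  have : DiscreteMeasurableSpace ι := ⟨fun _ => trivial⟩
  let μ := (PMF.uniformOfFintype ι).toMeasure
  have hint (f : ι → ℝ) : ∫ i, f i ∂μ = 𝔼 i, f i := by
    rw [PMF.integral_eq_sum, Fintype.expect_eq_sum_div_card, Finset.sum_div]
    simp [PMF.uniformOfFintype_apply, div_eq_inv_mul]
  have hoeffding := (ProbabilityTheory.hasSubgaussianMGF_of_mem_Icc (μ := μ)
    (measurable_of_countable X).aemeasurable (Filter.Eventually.of_forall hX)).mgf_le t
  simp only [ProbabilityTheory.mgf, hint] at hoeffding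
  have hcenter : 𝔼 i, exp (t * X i) = exp (t * 𝔼 i, X i) * 𝔼 i, exp (t * (X i - 𝔼 j, X j)) := by
    rw [Finset.mul_expect]
    refine Finset.expect_congr rfl fun i _ => ?_
    rw [← exp_add]
    ring_nf
  have hvar : ((‖b - a‖₊ / 2) ^ 2 : NNReal) * t ^ 2 / 2 = t ^ 2 * (b - a) ^ 2 / 8 := by
    push_cast
    rw [Real.norm_eq_abs, div_pow, sq_abs]
    ring
  rw [hcenter, exp_add]
  gcongr
  exact hoeffding.trans_eq (by rw [hvar])

theorem expect_exp_mul_le_of_forall_sub_le {ι : Type*} [Fintype ι] [Nonempty ι] (X : ι → ℝ)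
    {c : ℝ} (hX : ∀ i j, X i - X j ≤ c) (t : ℝ) :
    𝔼 i, exp (t * X i) ≤ exp (t * 𝔼 i, X i + t ^ 2 * c ^ 2 / 8) := by
  obtain ⟨i₀, -, hi₀⟩ := Finset.exists_min_image univ X univ_nonempty
  simpa using expect_exp_mul_le_of_mem_Icc X (a := X i₀) (b := X i₀ + c)
    (fun i => ⟨hi₀ i (mem_univ i), by linarith [hX i i₀]⟩) t

theorem expect_fin_cons {C M : Type*} [Fintype C] [AddCommMonoid M] [Module ℚ≥0 M] {L : ℕ}
    (F : (Fin (L + 1) → C) → M) :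
    𝔼 u, F u = 𝔼 w : Fin L → C, 𝔼 x : C, F (Fin.cons x w) := by
  rw [Finset.expect_comm, ← Finset.expect_product', Finset.univ_product_univ]
  exact (Fintype.expect_equiv (Fin.consEquiv fun _ => C) _ _ fun _ => rfl).symm

theorem expect_comp_apply {ι C M : Type*} [Fintype ι] [DecidableEq ι] [Fintype C] [Nonempty C]
    [AddCommMonoid M] [Module ℚ≥0 M] (f : C → M) (i : ι) :
    𝔼 u : ι → C, f (u i) = 𝔼 x, f x := by
  rw [Fintype.expect_equiv (Equiv.funSplitAt i C) (fun u => f (u i)) (fun p => f p.1)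
    fun _ => rfl, ← Finset.univ_product_univ, Finset.expect_product]
  exact Finset.expect_congr rfl fun x _ => Finset.expect_const univ_nonempty (f x)

theorem expect_exp_mul_le_of_bounded_differences {C : Type*} [Fintype C] [Nonempty C] {c : ℝ}
    {L : ℕ} (f : (Fin L → C) → ℝ) (hf : ∀ u i a, f u - f (Function.update u i a) ≤ c) (t : ℝ) :
    𝔼 u, exp (t * f u) ≤ exp (t * 𝔼 u, f u + t ^ 2 * L * c ^ 2 / 8) := by
  induction L with
  | zero => simp
  | succ L ih =>
    set g : (Fin L → C) → ℝ := fun w => 𝔼 x, f (Fin.cons x w) with hg_def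
    have hg : ∀ w i a, g w - g (Function.update w i a) ≤ c := by
      intro w i a
      rw [← Finset.expect_sub_distrib]
      refine Finset.expect_le univ_nonempty fun x _ => ?_
      rw [Fin.cons_update]
      exact hf _ _ _
    have hslice : ∀ w, 𝔼 x, exp (t * f (Fin.cons x w)) ≤ exp (t * g w + t ^ 2 * c ^ 2 / 8) :=
      fun w => expect_exp_mul_le_of_forall_sub_le _ (fun x y => by
        simpa [Fin.update_cons_zero] using hf (Fin.cons x w) 0 y) t
    calc 𝔼 u, exp (t * f u) = 𝔼 w, 𝔼 x, exp (t * f (Fin.cons x w)) := expect_fin_cons _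
      _ ≤ 𝔼 w, exp (t * g w) * exp (t ^ 2 * c ^ 2 / 8) :=
          Finset.expect_le_expect fun w _ => (hslice w).trans_eq (exp_add _ _)
      _ = (𝔼 w, exp (t * g w)) * exp (t ^ 2 * c ^ 2 / 8) := by rw [Finset.expect_mul]
      _ ≤ exp (t * 𝔼 w, g w + t ^ 2 * L * c ^ 2 / 8) * exp (t ^ 2 * c ^ 2 / 8) := by
          gcongr
          exact ih g hg
      _ = exp (t * 𝔼 u, f u + t ^ 2 * ↑(L + 1) * c ^ 2 / 8) := by
          rw [← exp_add, expect_fin_cons f, hg_def]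
          push_cast
          ring_nf

theorem expect_smul_eq_expect {G X M : Type*} [Group G] [Fintype G] [MulAction G X]
    [AddCommMonoid M] [Module ℚ≥0 M] {s : Finset X} {x : X} (hx : x ∈ s)
    (hs : ∀ (g : G), ∀ y ∈ s, g • y ∈ s) (htrans : ∀ y ∈ s, ∃ g : G, g • x = y) (F : X → M) :
    𝔼 g : G, F (g • x) = 𝔼 y ∈ s, F y := by
  have hconst : ∀ y ∈ s, 𝔼 g : G, F (g • y) = 𝔼 g : G, F (g • x) := by
    rintro y hy
    obtain ⟨g₀, rfl⟩ := htrans y hy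
    exact Fintype.expect_equiv (Equiv.mulRight g₀) _ _ fun g => by simp [mul_smul]
  have hperm : ∀ g : G, 𝔼 y ∈ s, F (g • y) = 𝔼 y ∈ s, F y := fun g =>
    Finset.expect_nbij (g • ·) (fun y hy => hs g y hy) (fun _ _ => rfl)
      (MulAction.injective g).injOn
      (fun y hy => ⟨g⁻¹ • y, hs g⁻¹ y hy, smul_inv_smul g y⟩)
  calc 𝔼 g : G, F (g • x) = 𝔼 y ∈ s, 𝔼 g : G, F (g • y) := by
        rw [Finset.expect_congr rfl hconst, Finset.expect_const ⟨x, hx⟩]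
    _ = 𝔼 y ∈ s, F y := by
        rw [Finset.expect_comm, Finset.expect_congr rfl fun g _ => hperm g,
          Finset.expect_const univ_nonempty]

theorem expect_perm_smul_embedding {C ι M : Type*} [Fintype C] [DecidableEq C] [Fintype ι]
    [DecidableEq ι] [AddCommMonoid M] [Module ℚ≥0 M] (x : ι ↪ C) (F : (ι ↪ C) → M) :
    𝔼 ρ : Equiv.Perm C, F (ρ • x) = 𝔼 y, F y :=
  expect_smul_eq_expect (mem_univ x) (fun _ _ _ => mem_univ _)
    (fun y _ => Equiv.Perm.exists_smul_eq_embedding x y) F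

theorem exists_embedding_map_univ_eq {C : Type*} {L : ℕ} {S : Finset C} (hS : #S = L) :
    ∃ x : Fin L ↪ C, univ.map x = S :=
  ⟨(S.equivFinOfCardEq hS).symm.toEmbedding.trans (Function.Embedding.subtype _), by
    ext c
    simpa using ⟨by rintro ⟨a, rfl⟩; exact Subtype.prop _,
      fun hc => ⟨S.equivFinOfCardEq hS ⟨c, hc⟩, by simp⟩⟩⟩

theorem exists_embedding_comp_eq {C : Type*} [Fintype C] {L : ℕ} (hL : L ≤ Fintype.card C)
    (u : Fin L → C) : ∃ (x : Fin L ↪ C) (τ : Fin L → Fin L), ∀ i, x (τ i) = u i := by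
  obtain ⟨S, hS, hcard⟩ := Finset.exists_superset_card_eq
    ((Finset.card_image_le).trans (by simp) : #(univ.image u) ≤ L) hL
  obtain ⟨x, rfl⟩ := exists_embedding_map_univ_eq hcard
  have hmem : ∀ i, ∃ j, x j = u i := fun i => by
    simpa using hS (mem_image_of_mem u (mem_univ i))
  choose τ hτ using hmem
  exact ⟨x, τ, hτ⟩

section Sampling

variable {V : Type*} [AddCommGroup V] [Module ℝ V] {L : ℕ} [NeZero L]

theorem sum_inv_smul_sum_comp_add_right (f : Fin L → V) (τ : Fin L → Fin L) :
    ∑ k : Fin L, (L : ℝ)⁻¹ • ∑ i, f (τ i + k) = ∑ i, f i := by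
  rw [← Finset.smul_sum, Finset.sum_comm]
  have hshift : ∀ i, ∑ k : Fin L, f (τ i + k) = ∑ j, f j := fun i =>
    Fintype.sum_equiv (Equiv.addLeft (τ i)) _ _ fun _ => rfl
  rw [Finset.sum_congr rfl fun i _ => hshift i, Finset.sum_const, Finset.card_univ,
    Fintype.card_fin, ← Nat.cast_smul_eq_nsmul ℝ, smul_smul,
    inv_mul_cancel₀ (Nat.cast_ne_zero.2 (NeZero.ne L)), one_smul]

theorem le_expect_sum_comp_add_right {φ : V → ℝ} (hφ : ConvexOn ℝ Set.univ φ) (f : Fin L → V)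
    (τ : Fin L → Fin L) : φ (∑ i, f i) ≤ 𝔼 k : Fin L, φ (∑ i, f (τ i + k)) := by
  have hjensen := hφ.map_sum_le (t := univ) (w := fun _ => (L : ℝ)⁻¹)
    (p := fun k => ∑ i, f (τ i + k)) (fun _ _ => by positivity)
    (by simp [Finset.card_univ, NeZero.ne L]) (fun _ _ => Set.mem_univ _)
  rw [sum_inv_smul_sum_comp_add_right] at hjensen
  rw [Fintype.expect_eq_sum_div_card, Fintype.card_fin, Finset.sum_div]
  simpa [div_eq_inv_mul] using hjensen

variable {C : Type*} [Fintype C]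

theorem expect_embedding_le_expect_comp {φ : V → ℝ} (hφ : ConvexOn ℝ Set.univ φ) (h : C → V)
    (τ : Fin L → Fin L) :
    𝔼 x : Fin L ↪ C, φ (∑ i, h (x i)) ≤ 𝔼 x : Fin L ↪ C, φ (∑ i, h (x (τ i))) := by
  have hrot : ∀ k : Fin L, 𝔼 x : Fin L ↪ C, φ (∑ i, h (x (τ i + k)))
      = 𝔼 x : Fin L ↪ C, φ (∑ i, h (x (τ i))) := fun k =>
    Fintype.expect_equiv (Equiv.embeddingCongr (Equiv.addRight k).symm (Equiv.refl C)) _ _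
      fun x => by simp [Equiv.embeddingCongr]
  calc 𝔼 x : Fin L ↪ C, φ (∑ i, h (x i))
      ≤ 𝔼 x : Fin L ↪ C, 𝔼 k : Fin L, φ (∑ i, h (x (τ i + k))) :=
        Finset.expect_le_expect fun x _ => le_expect_sum_comp_add_right hφ (h ∘ x) τ
    _ = 𝔼 x : Fin L ↪ C, φ (∑ i, h (x (τ i))) := by
        rw [Finset.expect_comm, Finset.expect_congr rfl fun k _ => hrot k,
          Finset.expect_const univ_nonempty]

theorem expect_embedding_le_expect {φ : V → ℝ} (hφ : ConvexOn ℝ Set.univ φ) (h : C → V)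
    (hL : L ≤ Fintype.card C) :
    𝔼 x : Fin L ↪ C, φ (∑ i, h (x i)) ≤ 𝔼 u : Fin L → C, φ (∑ i, h (u i)) := by
  have : Nonempty C := Fintype.card_pos_iff.1 ((NeZero.pos L).trans_le hL)
  -- `u = x ∘ τ` for an embedding `x`, and `ρ • x` is a uniformly random embedding
  have horbit : ∀ u : Fin L → C, 𝔼 x : Fin L ↪ C, φ (∑ i, h (x i))
      ≤ 𝔼 ρ : Equiv.Perm C, φ (∑ i, h (ρ (u i))) := by
    intro u
    obtain ⟨x, τ, hxτ⟩ := exists_embedding_comp_eq hL u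
    calc 𝔼 x : Fin L ↪ C, φ (∑ i, h (x i)) ≤ 𝔼 y : Fin L ↪ C, φ (∑ i, h (y (τ i))) :=
          expect_embedding_le_expect_comp hφ h τ
      _ = 𝔼 ρ : Equiv.Perm C, φ (∑ i, h (ρ (u i))) := by
          rw [← expect_perm_smul_embedding x]
          simp [Function.Embedding.smul_apply, hxτ]
  have hrelabel : ∀ ρ : Equiv.Perm C, 𝔼 u : Fin L → C, φ (∑ i, h (ρ (u i)))
      = 𝔼 u : Fin L → C, φ (∑ i, h (u i)) := fun ρ =>
    Fintype.expect_equiv (Equiv.arrowCongr (Equiv.refl _) ρ) _ _ fun u => rfl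
  calc 𝔼 x : Fin L ↪ C, φ (∑ i, h (x i))
      = 𝔼 u : Fin L → C, 𝔼 x : Fin L ↪ C, φ (∑ i, h (x i)) :=
        (Finset.expect_const univ_nonempty _).symm
    _ ≤ 𝔼 u : Fin L → C, 𝔼 ρ : Equiv.Perm C, φ (∑ i, h (ρ (u i))) :=
        Finset.expect_le_expect fun u _ => horbit u
    _ = 𝔼 u : Fin L → C, φ (∑ i, h (u i)) := by
        rw [Finset.expect_comm, Finset.expect_congr rfl fun ρ _ => hrelabel ρ,
          Finset.expect_const univ_nonempty]

end Sampling

def balancedFunctions (C : Type*) [Fintype C] [DecidableEq C] (M L : ℕ) : Finset (C → Fin M) :=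
  univ.filter fun g => ∀ m, #(univ.filter fun x => g x = m) = L

theorem filter_apply_perm_inv_eq_map {C : Type*} [Fintype C] {M : ℕ} (g : C → Fin M)
    (ρ : Equiv.Perm C) (m : Fin M) :
    univ.filter (fun x => g (ρ⁻¹ x) = m) = (univ.filter fun x => g x = m).map ρ.toEmbedding := by
  ext x
  simp [Equiv.Perm.inv_def]

section Balanced

variable {C : Type*} [Fintype C] [DecidableEq C] {M L : ℕ}

theorem balancedFunctions_nonempty (hcard : Fintype.card C = L * M) :
    (balancedFunctions C M L).Nonempty := by
  obtain ⟨e⟩ : Nonempty (C ≃ Fin L × Fin M) := Fintype.card_eq.1 (by simp [hcard])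
  refine ⟨fun x => (e x).2, mem_filter.2 ⟨mem_univ _, fun m => ?_⟩⟩
  have : (univ.filter fun x => (e x).2 = m) = (univ ×ˢ {m}).map e.symm.toEmbedding := by
    ext x
    simp [Prod.ext_iff, eq_comm]
  simp [this]

theorem exists_perm_comp_eq {g g' : C → Fin M} (hg : g ∈ balancedFunctions C M L)
    (hg' : g' ∈ balancedFunctions C M L) : ∃ ρ : Equiv.Perm C, ∀ x, g (ρ x) = g' x := by
  have e : ∀ m, {x // g' x = m} ≃ {x // g x = m} := fun m =>
    Fintype.equivOfCardEq (by
      rw [Fintype.card_subtype, Fintype.card_subtype, (mem_filter.1 hg).2, (mem_filter.1 hg').2])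
  exact ⟨Equiv.ofFiberEquiv e, Equiv.ofFiberEquiv_map e⟩

theorem expect_balancedFunctions_fiber {V : Type*} [AddCommMonoid V] [Module ℚ≥0 V]
    (hcard : Fintype.card C = L * M) (m : Fin M) (F : Finset C → V) :
    𝔼 g ∈ balancedFunctions C M L, F (univ.filter fun x => g x = m) =
      𝔼 x : Fin L ↪ C, F (univ.map x) := by
  let _ : MulAction (Equiv.Perm C) (C → Fin M) := arrowAction
  have hsmul : ∀ (ρ : Equiv.Perm C) (g : C → Fin M) (m : Fin M),
      univ.filter (fun x => (ρ • g) x = m) = (univ.filter fun x => g x = m).map ρ.toEmbedding :=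
    fun ρ g m => filter_apply_perm_inv_eq_map g ρ m
  obtain ⟨g₀, hg₀⟩ := balancedFunctions_nonempty hcard
  obtain ⟨x₀, hx₀⟩ := exists_embedding_map_univ_eq ((mem_filter.1 hg₀).2 m)
  have hinv : ∀ (ρ : Equiv.Perm C), ∀ g ∈ balancedFunctions C M L,
      ρ • g ∈ balancedFunctions C M L := fun ρ g hg =>
    mem_filter.2 ⟨mem_univ _, fun m => by rw [hsmul, card_map, (mem_filter.1 hg).2 m]⟩
  have htrans : ∀ g ∈ balancedFunctions C M L, ∃ ρ : Equiv.Perm C, ρ • g₀ = g := fun g hg => by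
    obtain ⟨σ, hσ⟩ := exists_perm_comp_eq hg₀ hg
    refine ⟨σ⁻¹, funext fun x => ?_⟩
    change g₀ ((σ⁻¹)⁻¹ • x) = g x
    rw [inv_inv]
    exact hσ x
  rw [← expect_smul_eq_expect hg₀ hinv htrans, ← expect_perm_smul_embedding x₀]
  refine Finset.expect_congr rfl fun ρ _ => ?_
  rw [hsmul, ← hx₀, map_map]
  rfl

end Balanced

theorem ConvexOn.exp_const_mul {E : Type*} [AddCommMonoid E] [SMul ℝ E] {s : Set E}
    {φ : E → ℝ} (hφ : ConvexOn ℝ s φ) {t : ℝ} (ht : 0 ≤ t) :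
    ConvexOn ℝ s fun v => exp (t * φ v) := by
  refine ⟨hφ.1, fun v hv w hw a b ha hb hab => ?_⟩
  calc exp (t * φ (a • v + b • w)) ≤ exp (a * (t * φ v) + b * (t * φ w)) := by
        gcongr
        calc t * φ (a • v + b • w) ≤ t * (a • φ v + b • φ w) := by
              gcongr
              exact hφ.2 hv hw ha hb hab
          _ = a * (t * φ v) + b * (t * φ w) := by simp only [smul_eq_mul]; ring
    _ ≤ a • exp (t * φ v) + b • exp (t * φ w) :=
        convexOn_exp.2 (Set.mem_univ _) (Set.mem_univ _) ha hb hab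

theorem sum_comp_update {C V : Type*} [AddCommGroup V] {L : ℕ} (h : C → V) (u : Fin L → C)
    (i : Fin L) (b : C) :
    ∑ j, h (Function.update u i b j) = ∑ j, h (u j) - h (u i) + h b := by
  rw [← Finset.add_sum_erase _ _ (mem_univ i), ← Finset.add_sum_erase _ _ (mem_univ i),
    Function.update_self,
    Finset.sum_congr rfl fun j hj => by rw [Function.update_of_ne (ne_of_mem_erase hj)]]
  abel

theorem card_filter_balancedFunctions_div_le {C V : Type*} [Fintype C] [DecidableEq C]
    [AddCommGroup V] [Module ℝ V] {L M : ℕ} [NeZero L] (hcard : Fintype.card C = L * M)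
    (h : C → V) {φ : V → ℝ} (hφ : ConvexOn ℝ Set.univ φ) {c : ℝ} (hc : 0 < c)
    (hdiff : ∀ v a b, φ (v + h a) - φ (v + h b) ≤ c) (m : Fin M) {r : ℝ} (hr : 0 < r) :
    (#{g ∈ balancedFunctions C M L |
        r + 𝔼 u : Fin L → C, φ (∑ i, h (u i)) ≤ φ (∑ x ∈ univ.filter (g · = m), h x)} : ℝ) /
      #(balancedFunctions C M L) ≤ exp (-2 * r ^ 2 / (L * c ^ 2)) := by
  have hL : L ≤ Fintype.card C := hcard ▸ Nat.le_mul_of_pos_right L (Fin.pos m)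
  have : Nonempty C := Fintype.card_pos_iff.1 ((NeZero.pos L).trans_le hL)
  set a := r + 𝔼 u : Fin L → C, φ (∑ i, h (u i))
  -- the minimiser of `-t r + t² L c² / 8`
  set t := 4 * r / (L * c ^ 2)
  have ht : 0 ≤ t := by positivity
  have hbounded : ∀ (u : Fin L → C) i b,
      (φ (∑ j, h (u j)) - a) - (φ (∑ j, h (Function.update u i b j)) - a) ≤ c :=
    fun u i b => by
      have := hdiff ((∑ j, h (u j)) - h (u i)) (u i) b
      rw [sub_add_cancel] at this
      rw [sum_comp_update]
      linarith
  calc (#{g ∈ balancedFunctions C M L | a ≤ φ (∑ x ∈ univ.filter (g · = m), h x)} : ℝ) /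
        #(balancedFunctions C M L)
      = 𝔼 x : Fin L ↪ C, if a ≤ φ (∑ i, h (x i)) then (1 : ℝ) else 0 := by
        rw [← Finset.sum_boole, ← Finset.expect_eq_sum_div_card,
          expect_balancedFunctions_fiber hcard m fun S => if a ≤ φ (∑ x ∈ S, h x) then 1 else 0]
        simp only [Finset.sum_map]
    _ ≤ 𝔼 x : Fin L ↪ C, exp (t * (φ (∑ i, h (x i)) - a)) :=
        Finset.expect_le_expect fun x _ => by
          split_ifs with hx
          · exact one_le_exp (mul_nonneg ht (sub_nonneg.2 hx))
          · exact (exp_pos _).le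
    _ ≤ 𝔼 u : Fin L → C, exp (t * (φ (∑ i, h (u i)) - a)) :=
        expect_embedding_le_expect ((hφ.add_const (-a)).exp_const_mul ht) h hL
    _ ≤ exp (t * 𝔼 u : Fin L → C, (φ (∑ i, h (u i)) - a) + t ^ 2 * L * c ^ 2 / 8) :=
        expect_exp_mul_le_of_bounded_differences _ hbounded t
    _ = exp (-2 * r ^ 2 / (L * c ^ 2)) := by
        rw [Finset.expect_sub_distrib, Finset.expect_const univ_nonempty]
        congr 1
        simp only [a, t]
        field_simp
        ring

section TotalVariation

variable {A : Type*} [Fintype A]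

theorem convexOn_tv (Q : A → ℝ) : ConvexOn ℝ Set.univ fun P => tv P Q := by
  refine ⟨convex_univ, fun P _ P' _ a b ha hb hab => ?_⟩
  have hsplit : ∀ z, (a • P + b • P') z - Q z = a * (P z - Q z) + b * (P' z - Q z) := fun z => by
    simp only [Pi.add_apply, Pi.smul_apply, smul_eq_mul]
    linear_combination (Q z) * hab
  calc tv (a • P + b • P') Q = 1 / 2 * ∑ z, |a * (P z - Q z) + b * (P' z - Q z)| := by
        simp only [tv, hsplit]
    _ ≤ 1 / 2 * ∑ z, (a * |P z - Q z| + b * |P' z - Q z|) := by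
        gcongr with z
        exact (abs_add_le _ _).trans_eq
          (by rw [abs_mul, abs_mul, abs_of_nonneg ha, abs_of_nonneg hb])
    _ = a • tv P Q + b • tv P' Q := by
        simp only [tv, smul_eq_mul, Finset.sum_add_distrib, ← Finset.mul_sum]
        ring

theorem convexOn_tv_const_mul (k : ℝ) (Q : A → ℝ) :
    ConvexOn ℝ Set.univ fun v : A → ℝ => tv (fun z => k * v z) Q := by
  have := (convexOn_tv Q).comp_linearMap (k • LinearMap.id)
  rwa [Set.preimage_univ] at this

theorem tv_sub_tv_le (P Q R : A → ℝ) : tv P R - tv Q R ≤ tv P Q := by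
  simp only [tv, ← mul_sub, ← Finset.sum_sub_distrib]
  gcongr with z
  simpa using abs_sub_abs_le_abs_sub (P z - R z) (Q z - R z)

theorem tv_le_one {P Q : A → ℝ} (hP : ∀ a, 0 ≤ P a) (hP₁ : ∑ a, P a = 1) (hQ : ∀ a, 0 ≤ Q a)
    (hQ₁ : ∑ a, Q a = 1) : tv P Q ≤ 1 := by
  calc tv P Q ≤ 1 / 2 * ∑ a, (P a + Q a) := by
        unfold tv
        gcongr with a
        exact abs_sub_le_iff.2 ⟨by linarith [hQ a], by linarith [hP a]⟩
    _ = 1 := by rw [Finset.sum_add_distrib, hP₁, hQ₁]; norm_num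

theorem tv_const_mul_add {k : ℝ} (hk : 0 ≤ k) (v P Q : A → ℝ) :
    tv (fun z => k * (v z + P z)) (fun z => k * (v z + Q z)) = k * tv P Q := by
  simp only [tv, ← mul_sub, add_sub_add_left_eq_sub, abs_mul, abs_of_nonneg hk, ← Finset.mul_sum]
  ring

end TotalVariation

theorem card_filter_le_iSup_le_sum {α β ι : Type*} [ConditionallyCompleteLinearOrder β]
    [Fintype ι] [Nonempty ι] (s : Finset α) (f : ι → α → β) (a : β) :
    #{x ∈ s | a ≤ ⨆ i, f i x} ≤ ∑ i, #{x ∈ s | a ≤ f i x} := by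
  refine (card_le_card fun x hx => ?_).trans card_biUnion_le
  obtain ⟨hxs, hx⟩ := mem_filter.1 hx
  obtain ⟨i, hi⟩ := exists_eq_ciSup_of_finite (f := fun i => f i x)
  exact mem_biUnion.2 ⟨i, mem_univ i, mem_filter.2 ⟨hxs, hi ▸ hx⟩⟩

theorem card_filter_iSup_or_iSup_div_le {α β ι : Type*} [ConditionallyCompleteLinearOrder β]
    [Fintype ι] [Nonempty ι] (s : Finset α) (f g : ι → α → β) {a b : β} {ε : ℝ}
    (hf : ∀ i, (#{x ∈ s | a ≤ f i x} : ℝ) / #s ≤ ε)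
    (hg : ∀ i, (#{x ∈ s | b ≤ g i x} : ℝ) / #s ≤ ε) :
    (#{x ∈ s | a ≤ ⨆ i, f i x ∨ b ≤ ⨆ i, g i x} : ℝ) / #s ≤ 2 * Fintype.card ι * ε := by
  calc (#{x ∈ s | a ≤ ⨆ i, f i x ∨ b ≤ ⨆ i, g i x} : ℝ) / #s
      ≤ ((∑ i, #{x ∈ s | a ≤ f i x} + ∑ i, #{x ∈ s | b ≤ g i x} : ℕ) : ℝ) / #s := by
        refine div_le_div_of_nonneg_right ?_ (Nat.cast_nonneg _)
        rw [Nat.cast_le, filter_or]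
        exact (card_union_le _ _).trans (add_le_add (card_filter_le_iSup_le_sum _ _ _)
          (card_filter_le_iSup_le_sum _ _ _))
    _ ≤ ∑ _i : ι, ε + ∑ _i : ι, ε := by
        push_cast
        rw [add_div, Finset.sum_div, Finset.sum_div]
        exact add_le_add (Finset.sum_le_sum fun i _ => hf i) (Finset.sum_le_sum fun i _ => hg i)
    _ = 2 * Fintype.card ι * ε := by
        simp only [Finset.sum_const, Finset.card_univ, nsmul_eq_mul]
        ring

theorem card_filter_leakage_div_le {C Z : Type*} [Fintype C] [DecidableEq C] [Fintype Z]
    {L M : ℕ} [NeZero L] (hcard : Fintype.card C = L * M) (PZX : C → Z → ℝ)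
    (hpos : ∀ x z, 0 ≤ PZX x z) (hsum : ∀ x, ∑ z, PZX x z = 1) (PZ : Z → ℝ) (m : Fin M)
    {r : ℝ} (hr : 0 < r) :
    (#{g ∈ balancedFunctions C M L | r + ((Fintype.card C : ℝ) ^ L)⁻¹ *
        ∑ v : Fin L → C, tv (fun z => (L : ℝ)⁻¹ * ∑ i, PZX (v i) z) PZ ≤
          tv (fun z => (L : ℝ)⁻¹ * ∑ x ∈ univ.filter (g · = m), PZX x z) PZ} : ℝ) /
      #(balancedFunctions C M L) ≤ exp (-2 * L * r ^ 2) := by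
  have hLinv : (0 : ℝ) < (L : ℝ)⁻¹ := by simp [NeZero.pos L]
  have hmean : 𝔼 u : Fin L → C, tv (fun z => (L : ℝ)⁻¹ * ∑ i, PZX (u i) z) PZ =
      ((Fintype.card C : ℝ) ^ L)⁻¹ *
        ∑ v : Fin L → C, tv (fun z => (L : ℝ)⁻¹ * ∑ i, PZX (v i) z) PZ := by
    rw [Fintype.expect_eq_sum_div_card, Fintype.card_fun, Fintype.card_fin, Nat.cast_pow,
      div_eq_inv_mul]
  have := card_filter_balancedFunctions_div_le hcard PZX
    (φ := fun v => tv (fun z => (L : ℝ)⁻¹ * v z) PZ) (convexOn_tv_const_mul _ PZ) hLinv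
    (fun v a b => (tv_sub_tv_le _ _ _).trans <| (tv_const_mul_add hLinv.le v _ _).trans_le <|
      mul_le_of_le_one_right hLinv.le (tv_le_one (hpos a) (hsum a) (hpos b) (hsum b)))
    m hr
  simp only [Finset.sum_apply, hmean] at this
  rwa [show -2 * r ^ 2 / (L * (L : ℝ)⁻¹ ^ 2) = -2 * L * r ^ 2 by field_simp [NeZero.ne L]]
    at this

theorem card_filter_error_div_le {C : Type*} [Fintype C] [DecidableEq C] {L M : ℕ} [NeZero L]
    (hcard : Fintype.card C = L * M) (Pe : C → ℝ) (hPe0 : ∀ x, 0 ≤ Pe x) (hPe1 : ∀ x, Pe x ≤ 1)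
    (m : Fin M) {r : ℝ} (hr : 0 < r) :
    (#{g ∈ balancedFunctions C M L | r + (Fintype.card C : ℝ)⁻¹ * ∑ x, Pe x ≤
          (L : ℝ)⁻¹ * ∑ x ∈ univ.filter (g · = m), Pe x} : ℝ) /
      #(balancedFunctions C M L) ≤ exp (-2 * L * r ^ 2) := by
  have : Nonempty C := Fintype.card_pos_iff.1 (hcard ▸ Nat.mul_pos (NeZero.pos L) (Fin.pos m))
  have hmean :
      𝔼 u : Fin L → C, (L : ℝ)⁻¹ * ∑ i, Pe (u i) = (Fintype.card C : ℝ)⁻¹ * ∑ x, Pe x := by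
    rw [← Finset.mul_expect, Finset.expect_sum_comm,
      Finset.sum_congr rfl fun i _ => expect_comp_apply Pe i, Finset.sum_const, Finset.card_univ,
      Fintype.card_fin, nsmul_eq_mul, ← mul_assoc, inv_mul_cancel₀ (NeZero.ne' (L : ℝ)).symm,
      one_mul, Fintype.expect_eq_sum_div_card, div_eq_inv_mul]
  have hLinv : (0 : ℝ) < (L : ℝ)⁻¹ := by simp [NeZero.pos L]
  have := card_filter_balancedFunctions_div_le hcard Pe (φ := fun v => (L : ℝ)⁻¹ * v)
    ((convexOn_id convex_univ).smul hLinv.le) hLinv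
    (fun v a b => by
      rw [← mul_sub, add_sub_add_left_eq_sub]
      exact mul_le_of_le_one_right hLinv.le (by linarith [hPe1 a, hPe0 b]))
    m hr
  rwa [hmean, show -2 * r ^ 2 / (L * (L : ℝ)⁻¹ ^ 2) = -2 * L * r ^ 2 by
    field_simp [NeZero.ne L]] at this

theorem joint_concentration_hash_general
    {C Z : Type*} [Fintype C] [Fintype Z] [DecidableEq C]
    (L M : ℕ) (hL : 0 < L) (hM : 0 < M)
    (hcard : Fintype.card C = L * M)
    (PZX : C → Z → ℝ)
    (hpos : ∀ x z, 0 ≤ PZX x z) (hsum : ∀ x, ∑ z, PZX x z = 1)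
    (PZ : Z → ℝ)
    (Pe : C → ℝ) (hPe0 : ∀ x, 0 ≤ Pe x) (hPe1 : ∀ x, Pe x ≤ 1)
    (ε₀ : ℝ) (hε₀ : ε₀ = (Fintype.card C : ℝ)⁻¹ * ∑ x, Pe x)
    (μ : ℝ)
    (hμ : μ = ((Fintype.card C : ℝ) ^ L)⁻¹ *
        ∑ v : Fin L → C, tv (fun z => (L : ℝ)⁻¹ * ∑ i, PZX (v i) z) PZ)
    (r : ℝ) (hr : 0 < r) :
    (((univ.filter (fun g : C → Fin M =>
          ∀ m, (univ.filter (fun x => g x = m)).card = L)).filter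
        (fun g : C → Fin M =>
          (r + μ ≤ ⨆ m, tv (fun z =>
              (L : ℝ)⁻¹ * ∑ x ∈ univ.filter (fun x => g x = m), PZX x z) PZ) ∨
          (r + ε₀ ≤ ⨆ m,
              (L : ℝ)⁻¹ * ∑ x ∈ univ.filter (fun x => g x = m), Pe x))).card : ℝ)
      / ((univ.filter (fun g : C → Fin M =>
          ∀ m, (univ.filter (fun x => g x = m)).card = L)).card : ℝ)
      ≤ 2 * (M : ℝ) * Real.exp (-2 * L * r ^ 2) := by
  have : NeZero L := ⟨hL.ne'⟩
  have : Nonempty (Fin M) := ⟨⟨0, hM⟩⟩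
  subst hμ hε₀
  calc _ ≤ 2 * Fintype.card (Fin M) * exp (-2 * L * r ^ 2) :=
        card_filter_iSup_or_iSup_div_le (balancedFunctions C M L) _ _
          (fun m => card_filter_leakage_div_le hcard PZX hpos hsum PZ m hr)
          (fun m => card_filter_error_div_le hcard Pe hPe0 hPe1 m hr)
    _ = 2 * M * exp (-2 * L * r ^ 2) := by rw [Fintype.card_fin]

/-- joint concentration of leakage and error over random balanced
hash functions: let `C` have cardinality `L·M`, let `Pe : C → [0,1]` have average
`ε₀`, and let `G` be uniform over the balanced functions `g : C → Fin M` (all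
preimages of size `L`).  Then for every `r > 0`, the probability that
`max_m d(P_{Z|G⁻¹(m)}, P_Z) ≥ r + μ` or `max_m (1/L)·∑_{x∈G⁻¹(m)} Pe(x) ≥ r + ε₀`
is at most `2M·e^{−2Lr²}`, where `μ = E[d(P_{Z|𝒜}, P_Z)]` for an i.i.d. uniform
codebook `𝒜` of size `L`. -/
theorem joint_concentration_hash
    {C Z : Type*} [Fintype C] [Fintype Z] [DecidableEq C]
    (L M : ℕ) (hL : 0 < L) (hM : 0 < M)
    (hcard : Fintype.card C = L * M)
    (PZX : C → Z → ℝ)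
    (hpos : ∀ x z, 0 ≤ PZX x z) (hsum : ∀ x, ∑ z, PZX x z = 1)
    (PZ : Z → ℝ) (hPZ : ∀ z, PZ z = (Fintype.card C : ℝ)⁻¹ * ∑ x, PZX x z)
    (Pe : C → ℝ) (hPe0 : ∀ x, 0 ≤ Pe x) (hPe1 : ∀ x, Pe x ≤ 1)
    (ε₀ : ℝ) (hε₀ : ε₀ = (Fintype.card C : ℝ)⁻¹ * ∑ x, Pe x)
    (μ : ℝ)
    (hμ : μ = ((Fintype.card C : ℝ) ^ L)⁻¹ *
        ∑ v : Fin L → C, tv (fun z => (L : ℝ)⁻¹ * ∑ i, PZX (v i) z) PZ)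
    (r : ℝ) (hr : 0 < r) :
    (((univ.filter (fun g : C → Fin M =>
          ∀ m, (univ.filter (fun x => g x = m)).card = L)).filter
        (fun g : C → Fin M =>
          (r + μ ≤ ⨆ m, tv (fun z =>
              (L : ℝ)⁻¹ * ∑ x ∈ univ.filter (fun x => g x = m), PZX x z) PZ) ∨
          (r + ε₀ ≤ ⨆ m,
              (L : ℝ)⁻¹ * ∑ x ∈ univ.filter (fun x => g x = m), Pe x))).card : ℝ)
      / ((univ.filter (fun g : C → Fin M =>
          ∀ m, (univ.filter (fun x => g x = m)).card = L)).card : ℝ)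
      ≤ 2 * (M : ℝ) * Real.exp (-2 * L * r ^ 2) :=
  joint_concentration_hash_general L M hL hM hcard PZX hpos hsum PZ Pe hPe0 hPe1 ε₀ hε₀ μ hμ r hr
end
end
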